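/- For any κ ∈ (0, 1), the atom of μ at the bottom E of its support is given by μ({E}) = lim_{t→∞} Z_{κt} Z_{(1-κ)t} / Z_t. -/

import Mathlib

open MeasureTheory Real Set Filter

/-- Laplace transform of a measure on ℝ. -/
noncomputable def lapZ (μ : Measure ℝ) (t : ℝ) : ℝ := ∫ x, Real.exp (-t * x) ∂μ

/-!
Write `Z` for `lapZ μ`. Since `μ` lives on `[E, ∞)`, `Z_{κt} ≥ e^{-κtE} μ{E}` and
`Z_{(1-κ)t} ≥ e^{κtE} Z_t`, so the ratio is at least `μ{E}`. For the upper bound split `μ` at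
`A = [E, E + δ)`. On `A`, Hölder's inequality gives `Z^A_{κt} Z^A_{(1-κ)t} ≤ μ(A) Z^A_t`; the cross
terms involving the part of `μ` beyond `E + δ` are at most `e^{-t(E + κδ)} + e^{-t(E + (1-κ)δ)}`,
which is `o(Z_t)` because `μ` charges every `[E, E + ε)`. Hence the ratio is eventually below
`μ(A) + o(1)`, and `μ(A) → μ{E}` as `δ → 0`.
-/

open Topology

lemma integral_rpow_le {α : Type*} [MeasurableSpace α] {ν : Measure α} [IsFiniteMeasure ν]
    {f : α → ℝ} (hf0 : 0 ≤ᵐ[ν] f) (hf : Integrable f ν) {p : ℝ} (hp0 : 0 ≤ p) (hp1 : p ≤ 1) :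
    ∫ x, f x ^ p ∂ν ≤ (∫ x, f x ∂ν) ^ p * ν.real univ ^ (1 - p) := by
  have holder := ENNReal.lintegral_mul_norm_pow_le (μ := ν) (g := fun _ => 1)
    hf.aestronglyMeasurable.aemeasurable.ennreal_ofReal aemeasurable_const hp0 (sub_nonneg.2 hp1)
    (add_sub_cancel p 1)
  have hfin : (∫⁻ x, ENNReal.ofReal (f x) ∂ν) ^ p * (∫⁻ _, 1 ∂ν) ^ (1 - p) ≠ ⊤ :=
    ENNReal.mul_ne_top (ENNReal.rpow_ne_top_of_nonneg hp0 hf.lintegral_lt_top.ne)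
      (ENNReal.rpow_ne_top_of_nonneg (sub_nonneg.2 hp1) (by simp))
  rw [integral_eq_lintegral_of_nonneg_ae (hf0.mono fun x hx => rpow_nonneg hx p)
      (hf.aestronglyMeasurable.aemeasurable.pow_const p).aestronglyMeasurable,
    integral_eq_lintegral_of_nonneg_ae hf0 hf.aestronglyMeasurable]
  convert ENNReal.toReal_mono hfin holder using 1
  · refine congrArg ENNReal.toReal (lintegral_congr_ae (hf0.mono fun x hx => ?_))
    simp [ENNReal.ofReal_rpow_of_nonneg hx hp0]
  · simp [ENNReal.toReal_rpow, Measure.real]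

variable {μ : Measure ℝ} {E t : ℝ}

lemma lapZ_nonneg : 0 ≤ lapZ μ t := integral_nonneg fun _ => (exp_pos _).le

lemma lapZ_mul_lapZ_le [IsFiniteMeasure μ] (hint : Integrable (fun x => exp (-t * x)) μ) {κ : ℝ}
    (hκ0 : 0 ≤ κ) (hκ1 : κ ≤ 1) :
    lapZ μ (κ * t) * lapZ μ ((1 - κ) * t) ≤ μ.real univ * lapZ μ t := by
  have hpow (p x : ℝ) : exp (-t * x) ^ p = exp (-(p * t) * x) := by
    rw [← exp_mul]; ring_nf
  have hnonneg : 0 ≤ᵐ[μ] fun x => exp (-t * x) := ae_of_all _ fun _ => (exp_pos _).le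
  have h1 := integral_rpow_le hnonneg hint hκ0 hκ1
  have h2 := integral_rpow_le hnonneg hint (sub_nonneg.2 hκ1) (sub_le_self _ hκ0)
  simp only [hpow, sub_sub_cancel] at h1 h2
  calc lapZ μ (κ * t) * lapZ μ ((1 - κ) * t)
      ≤ (lapZ μ t ^ κ * μ.real univ ^ (1 - κ)) * (lapZ μ t ^ (1 - κ) * μ.real univ ^ κ) :=
        mul_le_mul h1 h2 lapZ_nonneg
          (mul_nonneg (rpow_nonneg lapZ_nonneg _) (rpow_nonneg measureReal_nonneg _))
    _ = μ.real univ * lapZ μ t := by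
        rw [mul_mul_mul_comm, ← rpow_add' lapZ_nonneg (by simp), mul_comm,
          ← rpow_add' measureReal_nonneg (by simp)]
        simp

lemma ae_le_of_measure_Iio_eq_zero (hE : μ (Iio E) = 0) : ∀ᵐ x ∂μ, E ≤ x := by
  simpa [ae_iff, Iio] using hE

lemma integrable_exp_neg_mul [IsFiniteMeasure μ] (hE : μ (Iio E) = 0) (ht : 0 ≤ t) :
    Integrable (fun x => exp (-t * x)) μ :=
  Integrable.of_bound (by fun_prop) (exp (-t * E)) <| (ae_le_of_measure_Iio_eq_zero hE).mono
    fun x hx => by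
      rw [norm_of_nonneg (exp_pos _).le]
      exact exp_le_exp.2 (by nlinarith)

lemma lapZ_le [IsFiniteMeasure μ] (hE : μ (Iio E) = 0) (ht : 0 ≤ t) :
    lapZ μ t ≤ μ.real univ * exp (-t * E) := by
  calc lapZ μ t ≤ ∫ _, exp (-t * E) ∂μ :=
        integral_mono_ae (integrable_exp_neg_mul hE ht) (integrable_const _) <|
          (ae_le_of_measure_Iio_eq_zero hE).mono fun x hx => exp_le_exp.2 (by nlinarith)
    _ = μ.real univ * exp (-t * E) := by rw [integral_const, smul_eq_mul]

lemma measureReal_mul_exp_le_lapZ [IsFiniteMeasure μ] (hE : μ (Iio E) = 0) (ht : 0 ≤ t)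
    {s : Set ℝ} (hs : MeasurableSet s) {b : ℝ} (hsb : s ⊆ Iic b) :
    μ.real s * exp (-t * b) ≤ lapZ μ t := by
  have hint := integrable_exp_neg_mul hE ht
  calc μ.real s * exp (-t * b) = ∫ _ in s, exp (-t * b) ∂μ := by
        rw [setIntegral_const, smul_eq_mul]
    _ ≤ ∫ x in s, exp (-t * x) ∂μ :=
        setIntegral_mono_on integrableOn_const hint.integrableOn hs fun x hx =>
          exp_le_exp.2 (by nlinarith [show x ≤ b from hsb hx])
    _ ≤ lapZ μ t := setIntegral_le_integral hint (ae_of_all _ fun x => (exp_pos _).le)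

lemma lapZ_pos [IsFiniteMeasure μ] [NeZero μ] (hE : μ (Iio E) = 0) (ht : 0 ≤ t) :
    0 < lapZ μ t :=
  integral_exp_pos (integrable_exp_neg_mul hE ht)

lemma exp_mul_lapZ_le_lapZ_sub [IsFiniteMeasure μ] (hE : μ (Iio E) = 0) {s : ℝ} (hs : 0 ≤ s)
    (hst : s ≤ t) : exp (s * E) * lapZ μ t ≤ lapZ μ (t - s) := by
  rw [lapZ, ← integral_const_mul]
  refine integral_mono_ae ((integrable_exp_neg_mul hE (hs.trans hst)).const_mul _)
    (integrable_exp_neg_mul hE (sub_nonneg.2 hst)) <|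
    (ae_le_of_measure_Iio_eq_zero hE).mono fun x hx => ?_
  simp only [← exp_add]
  exact exp_le_exp.2 (by nlinarith)

lemma measureReal_singleton_mul_lapZ_le [IsFiniteMeasure μ] (hE : μ (Iio E) = 0) {κ : ℝ}
    (hκ0 : 0 ≤ κ) (hκ1 : κ ≤ 1) (ht : 0 ≤ t) :
    μ.real {E} * lapZ μ t ≤ lapZ μ (κ * t) * lapZ μ ((1 - κ) * t) := by
  have hκt : 0 ≤ κ * t := mul_nonneg hκ0 ht
  calc μ.real {E} * lapZ μ t
      = (μ.real {E} * exp (-(κ * t) * E)) * (exp (κ * t * E) * lapZ μ t) := by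
        rw [mul_assoc, ← mul_assoc (exp _), ← exp_add]; simp
    _ ≤ lapZ μ (κ * t) * lapZ μ ((1 - κ) * t) := by
        rw [show (1 - κ) * t = t - κ * t by ring]
        exact mul_le_mul
          (measureReal_mul_exp_le_lapZ hE hκt (measurableSet_singleton E) (by simp))
          (exp_mul_lapZ_le_lapZ_sub hE hκt (by nlinarith))
          (mul_nonneg (exp_pos _).le lapZ_nonneg) lapZ_nonneg

lemma lapZ_restrict_compl_Ico_le [IsProbabilityMeasure μ] (hE : μ (Iio E) = 0) (δ : ℝ)
    (ht : 0 ≤ t) : lapZ (μ.restrict (Ico E (E + δ))ᶜ) t ≤ exp (-t * (E + δ)) := by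
  have hcompl : μ.restrict (Ico E (E + δ))ᶜ (Iio (E + δ)) = 0 := by
    rw [Measure.restrict_apply measurableSet_Iio]
    refine measure_mono_null (fun x ⟨hx, hxA⟩ => ?_) hE
    simp only [mem_compl_iff, mem_Ico, not_and, not_lt] at hxA
    exact lt_of_not_ge fun h => (hxA h).not_gt hx
  refine (lapZ_le hcompl ht).trans (mul_le_of_le_one_left (exp_pos _).le ?_)
  rw [measureReal_restrict_apply_univ]
  exact measureReal_le_one

lemma lapZ_mul_lapZ_le_measureReal_Ico_mul_add [IsProbabilityMeasure μ] (hE : μ (Iio E) = 0)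
    (δ : ℝ) {κ : ℝ} (hκ0 : 0 ≤ κ) (hκ1 : κ ≤ 1) (ht : 0 ≤ t) :
    lapZ μ (κ * t) * lapZ μ ((1 - κ) * t) ≤ μ.real (Ico E (E + δ)) * lapZ μ t +
      (exp (-t * (E + κ * δ)) + exp (-t * (E + (1 - κ) * δ))) := by
  set A := Ico E (E + δ)
  have hκt : 0 ≤ κ * t := mul_nonneg hκ0 ht
  have hκt' : 0 ≤ (1 - κ) * t := mul_nonneg (sub_nonneg.2 hκ1) ht
  have hsplit (s : ℝ) (hs : 0 ≤ s) : lapZ μ s = lapZ (μ.restrict A) s + lapZ (μ.restrict Aᶜ) s :=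
    (integral_add_compl measurableSet_Ico (integrable_exp_neg_mul hE hs)).symm
  have hbound (s : ℝ) (hs : 0 ≤ s) : lapZ μ s ≤ exp (-s * E) := by
    simpa using lapZ_le hE hs
  have hholder : lapZ (μ.restrict A) (κ * t) * lapZ (μ.restrict A) ((1 - κ) * t) ≤
      μ.real A * lapZ μ t := by
    refine (lapZ_mul_lapZ_le (integrable_exp_neg_mul hE ht).restrict hκ0 hκ1).trans ?_
    rw [measureReal_restrict_apply_univ]
    exact mul_le_mul_of_nonneg_left (setIntegral_le_integral (integrable_exp_neg_mul hE ht)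
      (ae_of_all _ fun _ => (exp_pos _).le)) measureReal_nonneg
  have hA_le : lapZ (μ.restrict A) (κ * t) ≤ exp (-(κ * t) * E) :=
    (le_add_of_nonneg_right lapZ_nonneg).trans ((hsplit _ hκt).symm.trans_le (hbound _ hκt))
  calc lapZ μ (κ * t) * lapZ μ ((1 - κ) * t)
      = lapZ (μ.restrict A) (κ * t) * lapZ (μ.restrict A) ((1 - κ) * t) +
          lapZ (μ.restrict Aᶜ) (κ * t) * lapZ μ ((1 - κ) * t) +
          lapZ (μ.restrict A) (κ * t) * lapZ (μ.restrict Aᶜ) ((1 - κ) * t) := by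
        rw [hsplit (κ * t) hκt, hsplit ((1 - κ) * t) hκt']; ring
    _ ≤ μ.real A * lapZ μ t + exp (-(κ * t) * (E + δ)) * exp (-((1 - κ) * t) * E) +
          exp (-(κ * t) * E) * exp (-((1 - κ) * t) * (E + δ)) :=
        add_le_add (add_le_add hholder
          (mul_le_mul (lapZ_restrict_compl_Ico_le hE δ hκt) (hbound _ hκt') lapZ_nonneg
            (exp_pos _).le))
          (mul_le_mul hA_le (lapZ_restrict_compl_Ico_le hE δ hκt') lapZ_nonneg (exp_pos _).le)
    _ = μ.real A * lapZ μ t + (exp (-t * (E + κ * δ)) + exp (-t * (E + (1 - κ) * δ))) := by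
        simp only [← exp_add]; ring_nf

lemma tendsto_measureReal_Ico_nhdsGT [IsFiniteMeasure μ] (E : ℝ) :
    Tendsto (fun δ => μ.real (Ico E (E + δ))) (𝓝[>] 0) (𝓝 (μ.real {E})) := by
  have hinter : ⋂ δ > (0 : ℝ), Ico E (E + δ) = {E} := by
    ext x
    simp only [mem_iInter, mem_Ico, mem_singleton_iff]
    refine ⟨fun h => le_antisymm (le_of_forall_pos_lt_add fun δ hδ => (h δ hδ).2) (h 1 one_pos).1,
      ?_⟩
    rintro rfl δ hδ
    exact ⟨le_rfl, lt_add_of_pos_right x hδ⟩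
  have h := tendsto_measure_biInter_gt (μ := μ) (s := fun δ => Ico E (E + δ)) (a := 0)
    (fun _ _ => nullMeasurableSet_Ico)
    (fun _ _ _ hij => Ico_subset_Ico_right (by linarith)) ⟨1, one_pos, measure_ne_top _ _⟩
  rw [hinter] at h
  exact (ENNReal.tendsto_toReal (measure_ne_top _ _)).comp h

lemma tendsto_exp_div_lapZ_atTop [IsFiniteMeasure μ] (hE0 : μ (Iio E) = 0)
    (hE1 : ∀ ε : ℝ, 0 < ε → 0 < μ (Ico E (E + ε))) {a : ℝ} (ha : 0 < a) :
    Tendsto (fun t => exp (-t * (E + a)) / lapZ μ t) atTop (𝓝 0) := by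
  set c := μ.real (Ico E (E + a / 2))
  have hc : 0 < c := ENNReal.toReal_pos (hE1 _ (half_pos ha)).ne' (measure_ne_top _ _)
  have hdecay : Tendsto (fun t => exp (-(a / 2 * t)) / c) atTop (𝓝 0) := by
    simpa using (tendsto_exp_neg_atTop_nhds_zero.comp
      (tendsto_id.const_mul_atTop (half_pos ha))).div_const c
  refine squeeze_zero' (Eventually.of_forall fun t => div_nonneg (exp_pos _).le lapZ_nonneg)
    ?_ hdecay
  filter_upwards [eventually_ge_atTop 0] with t ht
  calc exp (-t * (E + a)) / lapZ μ t ≤ exp (-t * (E + a)) / (c * exp (-t * (E + a / 2))) :=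
        div_le_div_of_nonneg_left (exp_pos _).le (by positivity)
          (measureReal_mul_exp_le_lapZ hE0 ht measurableSet_Ico fun _ hx => hx.2.le)
    _ = exp (-(a / 2 * t)) / c := by
        rw [div_mul_eq_div_div_swap, div_left_inj' hc.ne', div_eq_iff (exp_pos _).ne', ← exp_add]
        ring_nf

/-- For `κ ∈ (0,1)`, `μ({E}) = lim_{t→∞} Z_{κt} Z_{(1-κ)t} / Z_t`, where
`E = inf supp μ` (characterized by `μ(-∞,E) = 0` and `μ[E, E+ε) > 0` for every `ε > 0`). -/
theorem stmt_4 (μ : Measure ℝ) [IsProbabilityMeasure μ] (E : ℝ)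
    (hE0 : μ (Set.Iio E) = 0) (hE1 : ∀ ε : ℝ, 0 < ε → 0 < μ (Set.Ico E (E + ε)))
    (κ : ℝ) (hκ : κ ∈ Set.Ioo (0:ℝ) 1) :
    Tendsto (fun t => lapZ μ (κ * t) * lapZ μ ((1 - κ) * t) / lapZ μ t)
      atTop (nhds (μ {E}).toReal) := by
  obtain ⟨hκ0, hκ1⟩ := hκ
  refine tendsto_order.2 ⟨fun a ha => ?_, fun a ha => ?_⟩
  · filter_upwards [eventually_ge_atTop 0] with t ht
    have hZ := lapZ_pos hE0 ht
    rw [lt_div_iff₀ hZ]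
    exact (mul_lt_mul_of_pos_right ha hZ).trans_le
      (measureReal_singleton_mul_lapZ_le hE0 hκ0.le hκ1.le ht)
  · obtain ⟨δ, hδa, hδ⟩ := (((tendsto_measureReal_Ico_nhdsGT E).eventually (gt_mem_nhds ha)).and
      self_mem_nhdsWithin).exists
    have hbound := ((tendsto_exp_div_lapZ_atTop hE0 hE1 (mul_pos hκ0 hδ)).add
      (tendsto_exp_div_lapZ_atTop hE0 hE1 (mul_pos (sub_pos.2 hκ1) hδ))).const_add
      (μ.real (Ico E (E + δ)))
    rw [add_zero, add_zero] at hbound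
    filter_upwards [hbound.eventually (gt_mem_nhds hδa), eventually_ge_atTop 0] with t hlt ht
    have hZ := lapZ_pos hE0 ht
    refine lt_of_le_of_lt ?_ hlt
    rw [div_le_iff₀ hZ, add_mul, add_mul, div_mul_cancel₀ _ hZ.ne', div_mul_cancel₀ _ hZ.ne']
    exact lapZ_mul_lapZ_le_measureReal_Ico_mul_add hE0 δ hκ0.le hκ1.le ht
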